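/- arXiv:1605.00411 — 6 statements merged into one kernel-verified Lean document; each statement's English description precedes it below -/
import Mathlib

section
/- Let R be a commutative ℝ-algebra and M an invertible R-module (a finitely generated projective module of constant rank one, equivalently a module M admitting an R-module N with M ⊗_R N ≅ R). Let φ : M → M be an ℝ-linear map which is a first-order differential operator, i.e. for every f ∈ R the map m ↦ φ(f • m) − f • φ(m) is R-linear. Then φ is a derivation of M: there exists a unique ℝ-linear derivation X : R → R such that φ(f • m) = X(f) • m + f • φ(m) for all f ∈ R and m ∈ M. -/
/-!
The `R`-linear endomorphisms of an invertible module are exactly the homotheties, so the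
`R`-linear defect `m ↦ φ (f • m) - f • φ m` is multiplication by a scalar `X f`. An invertible
module is moreover faithful, so `X` is unique, and additivity, homogeneity and the Leibniz rule
of `X` are identities between scalars that can be checked after acting on every `m`, where they
follow from `φ (f • m) = X f • m + f • φ m`.
-/

namespace Module

variable {R M : Type*} [CommSemiring R] [AddCommGroup M] [Module R M]

def IsSymbol (φ : M → M) (X : R → R) : Prop :=
  ∀ (f : R) (m : M), φ (f • m) = X f • m + f • φ m

theorem exists_isSymbol_of_surjective_toModuleEnd
    (hM : Function.Surjective (DistribMulAction.toModuleEnd R (S := R) M))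
    (φ : M → M) (hφ : ∀ f : R, IsLinearMap R fun m => φ (f • m) - f • φ m) :
    ∃ X : R → R, IsSymbol φ X := by
  choose X hX using fun f => hM (IsLinearMap.mk' _ (hφ f))
  refine ⟨X, fun f m => ?_⟩
  have hdefect : X f • m = φ (f • m) - f • φ m := LinearMap.congr_fun (hX f) m
  rw [hdefect, sub_add_cancel]

namespace IsSymbol

variable [FaithfulSMul R M] {φ : M → M} {X Y : R → R}

theorem unique (hX : IsSymbol φ X) (hY : IsSymbol φ Y) : X = Y :=
  funext fun f => eq_of_smul_eq_smul fun m =>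
    add_right_cancel (b := f • φ m) ((hX f m).symm.trans (hY f m))

theorem map_one (hX : IsSymbol φ X) : X 1 = 0 :=
  eq_of_smul_eq_smul fun m => add_right_cancel (b := (1 : R) • φ m) <| by
    rw [← hX, zero_smul, zero_add, one_smul, one_smul]

theorem map_mul (hX : IsSymbol φ X) (f g : R) : X (f * g) = X f * g + f * X g :=
  eq_of_smul_eq_smul fun m => add_right_cancel (b := (f * g) • φ m) <| by
    rw [← hX, mul_smul, hX, hX, add_smul, mul_smul, mul_smul, mul_smul, smul_add]
    abel

variable {A : Type*} [CommSemiring A] [Module A M] {φ : M →ₗ[A] M}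

theorem map_add (hX : IsSymbol φ X) (f g : R) : X (f + g) = X f + X g :=
  eq_of_smul_eq_smul fun m => add_right_cancel (b := (f + g) • φ m) <| by
    rw [← hX, add_smul, φ.map_add, hX, hX, add_smul, add_smul]
    abel

variable [Algebra A R] [IsScalarTower A R M]

theorem map_smul (hX : IsSymbol φ X) (c : A) (f : R) : X (c • f) = c • X f :=
  eq_of_smul_eq_smul fun m => add_right_cancel (b := (c • f) • φ m) <| by
    rw [← hX, smul_assoc, φ.map_smul, hX, smul_assoc, smul_assoc, smul_add]

def derivation (hX : IsSymbol φ X) : Derivation A R R where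
  toFun := X
  map_add' := hX.map_add
  map_smul' := hX.map_smul
  map_one_eq_zero' := hX.map_one
  leibniz' f g := by
    simp only [LinearMap.coe_mk, AddHom.coe_mk, hX.map_mul, smul_eq_mul]
    ring

end IsSymbol

end Module

/-- If `M` is an invertible module over a commutative `ℝ`-algebra `R` (i.e. there is an
`R`-module `N` with `M ⊗[R] N ≅ R`), then every `ℝ`-linear first-order differential operator
`φ : M → M` (i.e. for every `f ∈ R` the map `m ↦ φ (f • m) - f • φ m` is `R`-linear)
is a derivation of `M`: there is a unique `ℝ`-linear derivation `X : R → R` (its symbol)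
such that `φ (f • m) = X f • m + f • φ m` for all `f` and `m`. -/
theorem first_order_operator_on_invertible_module_is_derivation
    {R M : Type*} [CommRing R] [Algebra ℝ R]
    [AddCommGroup M] [Module ℝ M] [Module R M] [IsScalarTower ℝ R M]
    (N : Type*) [AddCommGroup N] [Module R N]
    (e : TensorProduct R M N ≃ₗ[R] R)
    (φ : M →ₗ[ℝ] M)
    (hφ : ∀ f : R, IsLinearMap R (fun m : M => φ (f • m) - f • φ m)) :
    ∃! X : R →ₗ[ℝ] R,
      (∀ f g : R, X (f * g) = X f * g + f * X g) ∧
      (∀ (f : R) (m : M), φ (f • m) = X f • m + f • φ m) := by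
  have : Module.Invertible R M := .left e
  obtain ⟨X, hX⟩ := Module.exists_isSymbol_of_surjective_toModuleEnd
    (Module.Invertible.toModuleEnd_bijective R M).surjective φ hφ
  refine ⟨hX.derivation.toLinearMap, ⟨hX.map_mul, hX⟩, fun Y ⟨_, hY⟩ => ?_⟩
  exact LinearMap.ext (congrFun (Module.IsSymbol.unique (φ := φ) hY hX))
end

section
/- If (f, g) is a coisotropic pair, then for all (x1, x2, x3) ∈ ℝ³ the following integral identity holds: ∫₀^{2π} ∫₀^{2π} [ ∂f/∂x1 · X(g) − ∂g/∂x1 · X(f) + f·Y(g) − g·Y(f) ](x1,x2,x3,x4,x5) dx4 dx5 = 0. -/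
/-- Partial derivative of `f : ℝ^5 → ℝ` in the `i`-th coordinate direction. -/
noncomputable def pd (f : (Fin 5 → ℝ) → ℝ) (i : Fin 5) (p : Fin 5 → ℝ) : ℝ :=
  fderiv ℝ f p (Pi.single i 1)

/-- `X(h) = cos x1 · ∂h/∂x2 − sin x1 · ∂h/∂x3`. -/
noncomputable def Xop (f : (Fin 5 → ℝ) → ℝ) (p : Fin 5 → ℝ) : ℝ :=
  Real.cos (p 0) * pd f 1 p - Real.sin (p 0) * pd f 2 p

/-- `Y(h) = sin x1 · ∂h/∂x2 + cos x1 · ∂h/∂x3`. -/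
noncomputable def Yop (f : (Fin 5 → ℝ) → ℝ) (p : Fin 5 → ℝ) : ℝ :=
  Real.sin (p 0) * pd f 1 p + Real.cos (p 0) * pd f 2 p

/-- `f` is `2π`-periodic in each of the five variables. -/
def Periodic5 (f : (Fin 5 → ℝ) → ℝ) : Prop :=
  ∀ (p : Fin 5 → ℝ) (i : Fin 5), f (p + Pi.single i (2 * Real.pi)) = f p

/-- A coisotropic pair: two smooth `2π`-periodic functions satisfying the
coisotropicity PDE (★): `∂f/∂x1 · X(g) − ∂g/∂x1 · X(f) = ∂g/∂x4 − ∂f/∂x5 + g·Y(f) − f·Y(g)`. -/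
def CoisotropicPair (f g : (Fin 5 → ℝ) → ℝ) : Prop :=
  ContDiff ℝ (⊤ : ℕ∞) f ∧ ContDiff ℝ (⊤ : ℕ∞) g ∧ Periodic5 f ∧ Periodic5 g ∧
  ∀ p : Fin 5 → ℝ,
    pd f 0 p * Xop g p - pd g 0 p * Xop f p
      = pd g 3 p - pd f 4 p + g p * Yop f p - f p * Yop g p

/- ### auxiliary lemmas -/

lemma pd_continuous (h : (Fin 5 → ℝ) → ℝ) (hs : ContDiff ℝ (⊤ : ℕ∞) h) (i : Fin 5) :
    Continuous (pd h i) := by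
  have : Continuous (fderiv ℝ h) := (hs.continuous_fderiv (by simp))
  exact this.clm_apply continuous_const

lemma update_eq_add (q : Fin 5 → ℝ) (i : Fin 5) (t : ℝ) :
    Function.update q i t = Function.update q i 0 + t • (Pi.single i 1 : Fin 5 → ℝ) := by
  funext j
  by_cases hj : j = i
  · subst hj; simp
  · simp [Function.update_of_ne hj, Pi.single_eq_of_ne hj]

lemma hasDerivAt_update5 (h : (Fin 5 → ℝ) → ℝ) (hs : ContDiff ℝ (⊤ : ℕ∞) h)
    (q : Fin 5 → ℝ) (i : Fin 5) (t : ℝ) :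
    HasDerivAt (fun s => h (Function.update q i s)) (pd h i (Function.update q i t)) t := by
  have hA : HasDerivAt (fun s : ℝ => Function.update q i 0 + s • (Pi.single i 1 : Fin 5 → ℝ))
      ((Pi.single i 1 : Fin 5 → ℝ)) t := by
    simpa using ((hasDerivAt_id t).smul_const (Pi.single i 1 : Fin 5 → ℝ)).const_add
      (Function.update q i 0)
  have hdf : HasFDerivAt h (fderiv ℝ h (Function.update q i t)) (Function.update q i t) :=
    (hs.differentiable (by simp) (Function.update q i t)).hasFDerivAt
  have := hdf.comp_hasDerivAt t (by simpa [← update_eq_add] using hA)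
  exact this

/-- Key lemma: the integral of a partial derivative of a smooth periodic function
over a full period, along the corresponding coordinate slot, vanishes. -/
lemma key (h : (Fin 5 → ℝ) → ℝ) (hs : ContDiff ℝ (⊤ : ℕ∞) h) (hp : Periodic5 h)
    (q : Fin 5 → ℝ) (i : Fin 5) :
    ∫ t in (0:ℝ)..(2 * Real.pi), pd h i (Function.update q i t) = 0 := by
  have hFTC : ∫ t in (0:ℝ)..(2 * Real.pi), pd h i (Function.update q i t)
      = h (Function.update q i (2 * Real.pi)) - h (Function.update q i 0) := by
    exact intervalIntegral.integral_eq_sub_of_hasDerivAt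
      (fun t _ => hasDerivAt_update5 h hs q i t)
      (((pd_continuous h hs i).comp
        ((continuous_const.update i) continuous_id)).intervalIntegrable _ _)
  rw [hFTC]
  have : Function.update q i (2 * Real.pi)
      = Function.update q i 0 + Pi.single i (2 * Real.pi) := by
    funext j
    by_cases hj : j = i
    · subst hj; simp
    · simp [Function.update_of_ne hj, Pi.single_eq_of_ne hj]
  rw [this, hp]
  ring

set_option maxHeartbeats 1000000 in
/-- For a coisotropic pair `(f, g)` the integral identity
`∫₀^{2π}∫₀^{2π} [∂f/∂x1·X(g) − ∂g/∂x1·X(f) + f·Y(g) − g·Y(f)] dx4 dx5 = 0` holds. -/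
theorem coisotropic_pair_integral_identity
    (f g : (Fin 5 → ℝ) → ℝ) (h : CoisotropicPair f g) (x1 x2 x3 : ℝ) :
    (∫ x4 in (0:ℝ)..(2 * Real.pi), ∫ x5 in (0:ℝ)..(2 * Real.pi),
      (pd f 0 ![x1, x2, x3, x4, x5] * Xop g ![x1, x2, x3, x4, x5]
        - pd g 0 ![x1, x2, x3, x4, x5] * Xop f ![x1, x2, x3, x4, x5]
        + f ![x1, x2, x3, x4, x5] * Yop g ![x1, x2, x3, x4, x5]
        - g ![x1, x2, x3, x4, x5] * Yop f ![x1, x2, x3, x4, x5])) = 0 := by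
  obtain ⟨hf, hg, hpf, hpg, hpde⟩ := h
  -- pointwise rewrite of the integrand using the PDE
  have hpt : ∀ p : Fin 5 → ℝ,
      pd f 0 p * Xop g p - pd g 0 p * Xop f p + f p * Yop g p - g p * Yop f p
        = pd g 3 p - pd f 4 p := by
    intro p; have := hpde p; linarith
  have hupd4 : ∀ x4 x5 : ℝ,
      (![x1, x2, x3, x4, x5] : Fin 5 → ℝ) = Function.update ![x1, x2, x3, x4, 0] 4 x5 := by
    intro x4 x5; funext j; fin_cases j <;> rfl
  have hupd3 : ∀ x4 x5 : ℝ,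
      (![x1, x2, x3, x4, x5] : Fin 5 → ℝ) = Function.update ![x1, x2, x3, 0, x5] 3 x4 := by
    intro x4 x5; funext j; fin_cases j <;> rfl
  have hcont3 : Continuous fun z : ℝ × ℝ => pd g 3 ![x1, x2, x3, z.1, z.2] := by
    apply (pd_continuous g hg 3).comp
    apply continuous_pi
    intro j
    fin_cases j <;> simp <;> fun_prop
  have hcg : Continuous fun z : ℝ × ℝ => pd g 3 ![x1, x2, x3, z.1, z.2] := by
    apply (pd_continuous g hg 3).comp
    apply continuous_pi
    intro j
    fin_cases j
    · exact continuous_const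
    · exact continuous_const
    · exact continuous_const
    · exact continuous_fst
    · exact continuous_snd
  have hcf : Continuous fun z : ℝ × ℝ => pd f 4 ![x1, x2, x3, z.1, z.2] := by
    apply (pd_continuous f hf 4).comp
    apply continuous_pi
    intro j
    fin_cases j
    · exact continuous_const
    · exact continuous_const
    · exact continuous_const
    · exact continuous_fst
    · exact continuous_snd
  have hint_f : ∀ x4 : ℝ,
      (∫ x5 in (0:ℝ)..(2 * Real.pi), pd f 4 ![x1, x2, x3, x4, x5]) = 0 := by
    intro x4
    have hk := key f hf hpf ![x1, x2, x3, x4, 0] 4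
    have : (fun x5 => pd f 4 (Function.update ![x1, x2, x3, x4, 0] 4 x5))
        = fun x5 => pd f 4 ![x1, x2, x3, x4, x5] := by
      funext x5; rw [← hupd4]
    rwa [this] at hk
  have hint_g : ∀ x5 : ℝ,
      (∫ x4 in (0:ℝ)..(2 * Real.pi), pd g 3 ![x1, x2, x3, x4, x5]) = 0 := by
    intro x5
    have hk := key g hg hpg ![x1, x2, x3, 0, x5] 3
    have : (fun x4 => pd g 3 (Function.update ![x1, x2, x3, 0, x5] 3 x4))
        = fun x4 => pd g 3 ![x1, x2, x3, x4, x5] := by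
      funext x4; rw [← hupd3]
    rwa [this] at hk
  have step1 :
      (∫ x4 in (0:ℝ)..(2 * Real.pi), ∫ x5 in (0:ℝ)..(2 * Real.pi),
        (pd f 0 ![x1, x2, x3, x4, x5] * Xop g ![x1, x2, x3, x4, x5]
          - pd g 0 ![x1, x2, x3, x4, x5] * Xop f ![x1, x2, x3, x4, x5]
          + f ![x1, x2, x3, x4, x5] * Yop g ![x1, x2, x3, x4, x5]
          - g ![x1, x2, x3, x4, x5] * Yop f ![x1, x2, x3, x4, x5]))
        = ∫ x4 in (0:ℝ)..(2 * Real.pi), ∫ x5 in (0:ℝ)..(2 * Real.pi),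
            (pd g 3 ![x1, x2, x3, x4, x5] - pd f 4 ![x1, x2, x3, x4, x5]) := by
    simp only [hpt]
  rw [step1]
  have step2 : ∀ x4 : ℝ,
      (∫ x5 in (0:ℝ)..(2 * Real.pi),
        (pd g 3 ![x1, x2, x3, x4, x5] - pd f 4 ![x1, x2, x3, x4, x5]))
      = ∫ x5 in (0:ℝ)..(2 * Real.pi), pd g 3 ![x1, x2, x3, x4, x5] := by
    intro x4
    have h1 : IntervalIntegrable (fun x5 : ℝ => pd g 3 ![x1, x2, x3, x4, x5])
        MeasureTheory.volume 0 (2 * Real.pi) :=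
      (hcg.comp (Continuous.prodMk_right x4)).intervalIntegrable _ _
    have h2 : IntervalIntegrable (fun x5 : ℝ => pd f 4 ![x1, x2, x3, x4, x5])
        MeasureTheory.volume 0 (2 * Real.pi) :=
      (hcf.comp (Continuous.prodMk_right x4)).intervalIntegrable _ _
    rw [intervalIntegral.integral_sub h1 h2, hint_f, sub_zero]
  simp only [step2]
  have h2pi : (0:ℝ) ≤ 2 * Real.pi := by positivity
  have hswap :
      (∫ x4 in (0:ℝ)..(2 * Real.pi), ∫ x5 in (0:ℝ)..(2 * Real.pi),
        pd g 3 ![x1, x2, x3, x4, x5])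
      = ∫ x5 in (0:ℝ)..(2 * Real.pi), ∫ x4 in (0:ℝ)..(2 * Real.pi),
          pd g 3 ![x1, x2, x3, x4, x5] := by
    simp_rw [intervalIntegral.integral_of_le h2pi]
    apply MeasureTheory.integral_integral_swap
    rw [Function.uncurry_def, MeasureTheory.Measure.prod_restrict]
    apply MeasureTheory.IntegrableOn.mono_set
      (t := Set.Icc (0:ℝ) (2 * Real.pi) ×ˢ Set.Icc (0:ℝ) (2 * Real.pi))
    · exact hcg.continuousOn.integrableOn_compact (isCompact_Icc.prod isCompact_Icc)
    · exact Set.prod_mono Set.Ioc_subset_Icc_self Set.Ioc_subset_Icc_self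
  rw [hswap]
  simp only [hint_g, intervalIntegral.integral_zero]
end

section
/- Let ε > 0 and let (f_t, g_t), t ∈ (−ε, ε), be a family of pairs of smooth 2π-periodic functions ℝ^5 → ℝ, jointly smooth in (t, x), such that (f_t, g_t) is a coisotropic pair for every t and f_0 = g_0 = 0. Set ḟ := ∂f_t/∂t|_{t=0} and ġ := ∂g_t/∂t|_{t=0}. Then the infinitesimal deformation (ḟ, ġ) satisfies the Kuranishi obstruction equation: for all (x1, x2, x3) ∈ ℝ³, ∫₀^{2π} ∫₀^{2π} [ ∂ḟ/∂x1 · X(ġ) − ∂ġ/∂x1 · X(ḟ) + ḟ·Y(ġ) − ġ·Y(ḟ) ](x1,x2,x3,x4,x5) dx4 dx5 = 0. -/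
open Set MeasureTheory ContinuousLinearMap

noncomputable abbrev E5 := Fin 5 → ℝ

section core
variable {F : ℝ × E5 → ℝ} {s : Set (ℝ × E5)}
variable {F : ℝ × E5 → ℝ} {s : Set (ℝ × E5)}

lemma auxM1 (hs : IsOpen s) (hF : ContDiffOn ℝ (⊤ : ℕ∞) F s) {t : ℝ} {p : E5} (hq : (t, p) ∈ s) :
    HasDerivAt (fun t' => F (t', p)) (fderiv ℝ F (t, p) (1, 0)) t := by
  have hFd : DifferentiableAt ℝ F (t, p) :=
    (hF.contDiffAt (hs.mem_nhds hq)).differentiableAt (by simp)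
  have h1 : HasDerivAt (fun t' : ℝ => ((t' : ℝ), p)) ((1:ℝ), (0:E5)) t :=
    (hasDerivAt_id t).prodMk (hasDerivAt_const t p)
  exact (hFd.hasFDerivAt.comp_hasDerivAt t h1)

lemma auxM2 (hs : IsOpen s) (hF : ContDiffOn ℝ (⊤ : ℕ∞) F s) {t : ℝ} {p : E5} (hq : (t, p) ∈ s)
    (v : E5) :
    fderiv ℝ (fun x => F (t, x)) p v = fderiv ℝ F (t, p) (0, v) := by
  have hFd : DifferentiableAt ℝ F (t, p) :=
    (hF.contDiffAt (hs.mem_nhds hq)).differentiableAt (by simp)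
  have h1 : HasFDerivAt (fun x : E5 => ((t : ℝ), x)) (inr ℝ ℝ E5) p :=
    hasFDerivAt_prodMk_right t p
  have := (hFd.hasFDerivAt.comp p h1).fderiv
  rw [show (fun x : E5 => F (t, x)) = F ∘ (fun x : E5 => ((t:ℝ), x)) from rfl, this]
  simp

lemma auxM3 (hs : IsOpen s) (hF : ContDiffOn ℝ (⊤ : ℕ∞) F s) (w : ℝ × E5) :
    ContDiffOn ℝ (⊤ : ℕ∞) (fun q => fderiv ℝ F q w) s := by
  have h := hF.fderiv_of_isOpen hs (m := (⊤ : ℕ∞)) (by simp)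
  exact h.clm_apply contDiffOn_const

lemma auxM4 (hs : IsOpen s) (hF : ContDiffOn ℝ (⊤ : ℕ∞) F s) {q : ℝ × E5} (hq : q ∈ s)
    (w₁ w₂ : ℝ × E5) :
    fderiv ℝ (fun q' => fderiv ℝ F q' w₁) q w₂
      = fderiv ℝ (fun q' => fderiv ℝ F q' w₂) q w₁ := by
  have hca : ContDiffAt ℝ (⊤ : ℕ∞) F q := hF.contDiffAt (hs.mem_nhds hq)
  have hsymm := hca.isSymmSndFDerivAt (by rw [minSmoothness_of_isRCLikeNormedField]; exact WithTop.coe_le_coe.mpr (le_top : (2:ℕ∞) ≤ ⊤))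
  have hDF : ContDiffOn ℝ (⊤ : ℕ∞) (fderiv ℝ F) s := hF.fderiv_of_isOpen hs (m := (⊤ : ℕ∞)) (by simp)
  have hD : HasFDerivAt (fderiv ℝ F) (fderiv ℝ (fderiv ℝ F) q) q :=
    ((hDF.contDiffAt (hs.mem_nhds hq)).differentiableAt (by simp)).hasFDerivAt
  have e : ∀ w w' : ℝ × E5, fderiv ℝ (fun q' => fderiv ℝ F q' w) q w'
      = fderiv ℝ (fderiv ℝ F) q w' w := by
    intro w w'
    have hc := ((ContinuousLinearMap.apply ℝ ℝ w).hasFDerivAt.comp q hD).fderiv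
    rw [show (fun q' => fderiv ℝ F q' w)
        = (ContinuousLinearMap.apply ℝ ℝ w) ∘ (fderiv ℝ F) from rfl, hc]
    simp
  rw [e w₁ w₂, e w₂ w₁, hsymm w₂ w₁]

/-- first t-derivative of a directional x-derivative, with derivatives swapped. -/
lemma auxD1 (hs : IsOpen s) (hF : ContDiffOn ℝ (⊤ : ℕ∞) F s) {t : ℝ} {p : E5} (hq : (t, p) ∈ s)
    (w : ℝ × E5) :
    HasDerivAt (fun t' => fderiv ℝ F (t', p) w)
      (fderiv ℝ (fun q => fderiv ℝ F q (1, 0)) (t, p) w) t := by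
  have h := auxM1 hs (auxM3 hs hF w) hq
  rwa [auxM4 hs hF hq w (1, 0)] at h

/-- second t-derivative of a directional x-derivative. -/
lemma auxD2 (hs : IsOpen s) (hF : ContDiffOn ℝ (⊤ : ℕ∞) F s) {p : E5} (h0 : ((0:ℝ), p) ∈ s)
    (w : ℝ × E5) :
    deriv (deriv (fun t => fderiv ℝ F (t, p) w)) 0
      = fderiv ℝ (fun q => fderiv ℝ
          (fun q' => fderiv ℝ F q' (1, 0)) q (1, 0)) (0, p) w := by
  have hsl : IsOpen {t : ℝ | (t, p) ∈ s} :=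
    hs.preimage (by fun_prop : Continuous fun t : ℝ => ((t:ℝ), p))
  have hmem : {t : ℝ | (t, p) ∈ s} ∈ nhds (0:ℝ) := hsl.mem_nhds h0
  have hee : deriv (fun t => fderiv ℝ F (t, p) w)
      =ᶠ[nhds (0:ℝ)] fun t => fderiv ℝ (fun q => fderiv ℝ F q (1, 0)) (t, p) w := by
    filter_upwards [hmem] with t ht
    exact (auxD1 hs hF ht w).deriv
  rw [hee.deriv_eq]
  exact (auxD1 hs (auxM3 hs hF (1, 0)) h0 w).deriv

lemma auxSdiff {u : ℝ → ℝ} {sl : Set ℝ} (hs : IsOpen sl) (hu : ContDiffOn ℝ (⊤ : ℕ∞) u sl)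
    {t : ℝ} (ht : t ∈ sl) : DifferentiableAt ℝ u t :=
  (hu.contDiffAt (hs.mem_nhds ht)).differentiableAt (by simp)

lemma auxDDsub {a b : ℝ → ℝ} {sl : Set ℝ} (hs : IsOpen sl) (h0 : (0:ℝ) ∈ sl)
    (ha : ContDiffOn ℝ (⊤ : ℕ∞) a sl) (hb : ContDiffOn ℝ (⊤ : ℕ∞) b sl) :
    deriv (deriv (fun t => a t - b t)) 0 = deriv (deriv a) 0 - deriv (deriv b) 0 := by
  have ha' := ha.deriv_of_isOpen hs (m := (⊤ : ℕ∞)) (by simp)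
  have hb' := hb.deriv_of_isOpen hs (m := (⊤ : ℕ∞)) (by simp)
  have hae : deriv (fun t => a t - b t) =ᶠ[nhds (0:ℝ)] fun t => deriv a t - deriv b t := by
    filter_upwards [hs.mem_nhds h0] with t ht
    exact deriv_sub (auxSdiff hs ha ht) (auxSdiff hs hb ht)
  rw [hae.deriv_eq]
  exact deriv_sub (auxSdiff hs ha' h0) (auxSdiff hs hb' h0)

lemma auxDDadd {a b : ℝ → ℝ} {sl : Set ℝ} (hs : IsOpen sl) (h0 : (0:ℝ) ∈ sl)
    (ha : ContDiffOn ℝ (⊤ : ℕ∞) a sl) (hb : ContDiffOn ℝ (⊤ : ℕ∞) b sl) :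
    deriv (deriv (fun t => a t + b t)) 0 = deriv (deriv a) 0 + deriv (deriv b) 0 := by
  have ha' := ha.deriv_of_isOpen hs (m := (⊤ : ℕ∞)) (by simp)
  have hb' := hb.deriv_of_isOpen hs (m := (⊤ : ℕ∞)) (by simp)
  have hae : deriv (fun t => a t + b t) =ᶠ[nhds (0:ℝ)] fun t => deriv a t + deriv b t := by
    filter_upwards [hs.mem_nhds h0] with t ht
    exact deriv_add (auxSdiff hs ha ht) (auxSdiff hs hb ht)
  rw [hae.deriv_eq]
  exact deriv_add (auxSdiff hs ha' h0) (auxSdiff hs hb' h0)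

lemma auxDDmul {u v : ℝ → ℝ} {sl : Set ℝ} (hs : IsOpen sl) (h0 : (0:ℝ) ∈ sl)
    (hu : ContDiffOn ℝ (⊤ : ℕ∞) u sl) (hv : ContDiffOn ℝ (⊤ : ℕ∞) v sl)
    (hu0 : u 0 = 0) (hv0 : v 0 = 0) :
    deriv (deriv (fun t => u t * v t)) 0 = 2 * (deriv u 0 * deriv v 0) := by
  have hu' := hu.deriv_of_isOpen hs (m := (⊤ : ℕ∞)) (by simp)
  have hv' := hv.deriv_of_isOpen hs (m := (⊤ : ℕ∞)) (by simp)
  have hae : deriv (fun t => u t * v t)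
      =ᶠ[nhds (0:ℝ)] fun t => deriv u t * v t + u t * deriv v t := by
    filter_upwards [hs.mem_nhds h0] with t ht
    exact deriv_mul (auxSdiff hs hu ht) (auxSdiff hs hv ht)
  rw [hae.deriv_eq]
  have h1 : HasDerivAt (fun t => deriv u t * v t + u t * deriv v t)
      ((deriv (deriv u) 0 * v 0 + deriv u 0 * deriv v 0)
        + (deriv u 0 * deriv v 0 + u 0 * deriv (deriv v) 0)) 0 := by
    exact (((auxSdiff hs hu' h0).hasDerivAt.mul (auxSdiff hs hv h0).hasDerivAt).add
      ((auxSdiff hs hu h0).hasDerivAt.mul (auxSdiff hs hv' h0).hasDerivAt))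
  rw [h1.deriv, hu0, hv0]; ring
end core

lemma auxLin (L : (ℝ × E5) →L[ℝ] ℝ) (c s : ℝ) (v₁ v₂ : E5) :
    L (0, c • v₁ - s • v₂) = c * L (0, v₁) - s * L (0, v₂) := by
  have h : ((0:ℝ), c • v₁ - s • v₂) = c • ((0:ℝ), v₁) - s • ((0:ℝ), v₂) := by
    ext <;> simp
  rw [h, map_sub, L.map_smul, L.map_smul]; simp

lemma auxLin' (L : (ℝ × E5) →L[ℝ] ℝ) (c s : ℝ) (v₁ v₂ : E5) :
    L (0, c • v₁ + s • v₂) = c * L (0, v₁) + s * L (0, v₂) := by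
  have h : ((0:ℝ), c • v₁ + s • v₂) = c • ((0:ℝ), v₁) + s • ((0:ℝ), v₂) := by
    ext <;> simp
  rw [h, map_add, L.map_smul, L.map_smul]; simp

noncomputable def A1 (F : ℝ × E5 → ℝ) : ℝ × E5 → ℝ := fun q => fderiv ℝ F q (1, 0)

lemma auxKey (ε : ℝ) (hε : 0 < ε) (f g : ℝ → (Fin 5 → ℝ) → ℝ)
    (hf : ContDiffOn ℝ (⊤ : ℕ∞) (fun q : ℝ × (Fin 5 → ℝ) => f q.1 q.2)
      (Set.Ioo (-ε) ε ×ˢ Set.univ))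
    (hg : ContDiffOn ℝ (⊤ : ℕ∞) (fun q : ℝ × (Fin 5 → ℝ) => g q.1 q.2)
      (Set.Ioo (-ε) ε ×ˢ Set.univ))
    (hco : ∀ t ∈ Set.Ioo (-ε) ε, CoisotropicPair (f t) (g t))
    (hf0 : f 0 = 0) (hg0 : g 0 = 0) (p : E5) :
    pd (fun q => deriv (fun t => f t q) 0) 0 p * Xop (fun q => deriv (fun t => g t q) 0) p
      - pd (fun q => deriv (fun t => g t q) 0) 0 p * Xop (fun q => deriv (fun t => f t q) 0) p
      + deriv (fun t => f t p) 0 * Yop (fun q => deriv (fun t => g t q) 0) p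
      - deriv (fun t => g t p) 0 * Yop (fun q => deriv (fun t => f t q) 0) p
    = (1/2) * (fderiv ℝ (A1 (A1 (fun q : ℝ × E5 => g q.1 q.2))) (0, p) (0, Pi.single 3 1)
      - fderiv ℝ (A1 (A1 (fun q : ℝ × E5 => f q.1 q.2))) (0, p) (0, Pi.single 4 1)) := by
  have hU : IsOpen (Set.Ioo (-ε) ε ×ˢ (Set.univ : Set E5)) := isOpen_Ioo.prod isOpen_univ
  have h0ε : (0:ℝ) ∈ Set.Ioo (-ε) ε := ⟨by linarith, hε⟩
  have hmem : ∀ {t : ℝ}, t ∈ Set.Ioo (-ε) ε → ∀ x : E5,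
      (t, x) ∈ Set.Ioo (-ε) ε ×ˢ (Set.univ : Set E5) := fun ht x => ⟨ht, trivial⟩
  -- the dotted functions
  have hFd_eq : (fun q => deriv (fun t => f t q) 0)
      = fun x : E5 => A1 (fun q : ℝ × E5 => f q.1 q.2) (0, x) :=
    funext fun x => (auxM1 hU hf (hmem h0ε x)).deriv
  have hGd_eq : (fun q => deriv (fun t => g t q) 0)
      = fun x : E5 => A1 (fun q : ℝ × E5 => g q.1 q.2) (0, x) :=
    funext fun x => (auxM1 hU hg (hmem h0ε x)).deriv
  have hA1f : ContDiffOn ℝ (⊤ : ℕ∞) (A1 (fun q : ℝ × E5 => f q.1 q.2))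
      (Set.Ioo (-ε) ε ×ˢ Set.univ) := auxM3 hU hf (1, 0)
  have hA1g : ContDiffOn ℝ (⊤ : ℕ∞) (A1 (fun q : ℝ × E5 => g q.1 q.2))
      (Set.Ioo (-ε) ε ×ˢ Set.univ) := auxM3 hU hg (1, 0)
  -- pd of the dotted functions
  have hpdFd : ∀ i : Fin 5, pd (fun q => deriv (fun t => f t q) 0) i p
      = fderiv ℝ (A1 (fun q : ℝ × E5 => f q.1 q.2)) (0, p) (0, Pi.single i 1) := by
    intro i; rw [hFd_eq]; simp only [pd]
    exact auxM2 hU hA1f (hmem h0ε p) _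
  have hpdGd : ∀ i : Fin 5, pd (fun q => deriv (fun t => g t q) 0) i p
      = fderiv ℝ (A1 (fun q : ℝ × E5 => g q.1 q.2)) (0, p) (0, Pi.single i 1) := by
    intro i; rw [hGd_eq]; simp only [pd]
    exact auxM2 hU hA1g (hmem h0ε p) _

  -- names for the uncurried functions
  set Ff : ℝ × E5 → ℝ := fun q : ℝ × E5 => f q.1 q.2 with hFfdef
  set Gf : ℝ × E5 → ℝ := fun q : ℝ × E5 => g q.1 q.2 with hGfdef
  -- directions
  set e : Fin 5 → ℝ × E5 := fun i => ((0:ℝ), (Pi.single i 1 : E5)) with hedef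
  set wX : ℝ × E5 := ((0:ℝ), Real.cos (p 0) • (Pi.single 1 1 : E5)
    - Real.sin (p 0) • (Pi.single 2 1 : E5)) with hwX
  set wY : ℝ × E5 := ((0:ℝ), Real.sin (p 0) • (Pi.single 1 1 : E5)
    + Real.cos (p 0) • (Pi.single 2 1 : E5)) with hwY
  -- slice smoothness
  have hslice : ∀ (H : ℝ × E5 → ℝ), ContDiffOn ℝ (⊤ : ℕ∞) H (Set.Ioo (-ε) ε ×ˢ Set.univ) →
      ContDiffOn ℝ (⊤ : ℕ∞) (fun t => H (t, p)) (Set.Ioo (-ε) ε) := by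
    intro H hH
    exact hH.comp ((contDiff_id.prodMk contDiff_const).contDiffOn) (fun t ht => hmem ht p)
  -- zero values at t = 0
  have hzf : ∀ v : E5, fderiv ℝ Ff (0, p) (0, v) = 0 := by
    intro v
    rw [← auxM2 hU hf (hmem h0ε p) v]
    have h1 : (fun x : E5 => Ff (0, x)) = fun _ : E5 => (0:ℝ) := by
      funext x; show f 0 x = 0; rw [hf0]; rfl
    rw [h1, fderiv_fun_const]; rfl
  have hzg : ∀ v : E5, fderiv ℝ Gf (0, p) (0, v) = 0 := by
    intro v
    rw [← auxM2 hU hg (hmem h0ε p) v]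
    have h1 : (fun x : E5 => Gf (0, x)) = fun _ : E5 => (0:ℝ) := by
      funext x; show g 0 x = 0; rw [hg0]; rfl
    rw [h1, fderiv_fun_const]; rfl
  -- the PDE in fderiv form
  have hPDE : ∀ t ∈ Set.Ioo (-ε) ε,
      fderiv ℝ Gf (t, p) (e 3) - fderiv ℝ Ff (t, p) (e 4)
        = fderiv ℝ Ff (t, p) (e 0) * fderiv ℝ Gf (t, p) wX
          - fderiv ℝ Gf (t, p) (e 0) * fderiv ℝ Ff (t, p) wX
          - g t p * fderiv ℝ Ff (t, p) wY
          + f t p * fderiv ℝ Gf (t, p) wY := by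
    intro t ht
    have hEq := (hco t ht).2.2.2.2 p
    have hfpd : ∀ i : Fin 5, pd (f t) i p = fderiv ℝ Ff (t, p) (e i) := by
      intro i; simp only [pd]; exact auxM2 hU hf (hmem ht p) _
    have hgpd : ∀ i : Fin 5, pd (g t) i p = fderiv ℝ Gf (t, p) (e i) := by
      intro i; simp only [pd]; exact auxM2 hU hg (hmem ht p) _
    have hXf : Xop (f t) p = fderiv ℝ Ff (t, p) wX := by
      simp only [Xop, hfpd, hedef, hwX]
      exact (auxLin _ _ _ _ _).symm
    have hXg : Xop (g t) p = fderiv ℝ Gf (t, p) wX := by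
      simp only [Xop, hgpd, hedef, hwX]
      exact (auxLin _ _ _ _ _).symm
    have hYf : Yop (f t) p = fderiv ℝ Ff (t, p) wY := by
      simp only [Yop, hfpd, hedef, hwY]
      exact (auxLin' _ _ _ _ _).symm
    have hYg : Yop (g t) p = fderiv ℝ Gf (t, p) wY := by
      simp only [Yop, hgpd, hedef, hwY]
      exact (auxLin' _ _ _ _ _).symm
    rw [hfpd 0, hgpd 0, hgpd 3, hfpd 4, hXf, hXg, hYf, hYg] at hEq
    linarith
  -- the two sides as functions of t
  have hev : (fun t => fderiv ℝ Gf (t, p) (e 3) - fderiv ℝ Ff (t, p) (e 4))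
      =ᶠ[nhds (0:ℝ)] (fun t => fderiv ℝ Ff (t, p) (e 0) * fderiv ℝ Gf (t, p) wX
          - fderiv ℝ Gf (t, p) (e 0) * fderiv ℝ Ff (t, p) wX
          - g t p * fderiv ℝ Ff (t, p) wY
          + f t p * fderiv ℝ Gf (t, p) wY) := by
    filter_upwards [isOpen_Ioo.mem_nhds h0ε] with t ht
    exact hPDE t ht
  have hdd : deriv (deriv (fun t => fderiv ℝ Gf (t, p) (e 3) - fderiv ℝ Ff (t, p) (e 4))) 0
      = deriv (deriv (fun t => fderiv ℝ Ff (t, p) (e 0) * fderiv ℝ Gf (t, p) wX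
          - fderiv ℝ Gf (t, p) (e 0) * fderiv ℝ Ff (t, p) wX
          - g t p * fderiv ℝ Ff (t, p) wY
          + f t p * fderiv ℝ Gf (t, p) wY)) 0 := hev.deriv.deriv_eq
  -- second derivative of the left (linear) side
  have hddl : deriv (deriv (fun t => fderiv ℝ Gf (t, p) (e 3) - fderiv ℝ Ff (t, p) (e 4))) 0
      = fderiv ℝ (A1 (A1 Gf)) (0, p) (e 3) - fderiv ℝ (A1 (A1 Ff)) (0, p) (e 4) := by
    have h1 := auxDDsub (a := fun t => fderiv ℝ Gf (t, p) (e 3))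
      (b := fun t => fderiv ℝ Ff (t, p) (e 4)) isOpen_Ioo h0ε
      (hslice _ (auxM3 hU hg (e 3))) (hslice _ (auxM3 hU hf (e 4)))
    rw [h1]
    have h2 := auxD2 hU hg (hmem h0ε p) (e 3)
    have h3 := auxD2 hU hf (hmem h0ε p) (e 4)
    rw [h2, h3]; rfl
  -- smoothness of slice pieces
  have smf0 := hslice _ (auxM3 hU hf (e 0))
  have smg0 := hslice _ (auxM3 hU hg (e 0))
  have smfX := hslice _ (auxM3 hU hf wX)
  have smgX := hslice _ (auxM3 hU hg wX)
  have smfY := hslice _ (auxM3 hU hf wY)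
  have smgY := hslice _ (auxM3 hU hg wY)
  have smvf := hslice _ hf
  have smvg := hslice _ hg
  -- second derivative of the right (quadratic) side
  have hdd1 : deriv (deriv (fun t => fderiv ℝ Ff (t, p) (e 0) * fderiv ℝ Gf (t, p) wX)) 0
      = 2 * (deriv (fun t => fderiv ℝ Ff (t, p) (e 0)) 0
          * deriv (fun t => fderiv ℝ Gf (t, p) wX) 0) :=
    auxDDmul isOpen_Ioo h0ε smf0 smgX (hzf _) (hzg _)
  have hdd2 : deriv (deriv (fun t => fderiv ℝ Gf (t, p) (e 0) * fderiv ℝ Ff (t, p) wX)) 0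
      = 2 * (deriv (fun t => fderiv ℝ Gf (t, p) (e 0)) 0
          * deriv (fun t => fderiv ℝ Ff (t, p) wX) 0) :=
    auxDDmul isOpen_Ioo h0ε smg0 smfX (hzg _) (hzf _)
  have hdd3 : deriv (deriv (fun t => g t p * fderiv ℝ Ff (t, p) wY)) 0
      = 2 * (deriv (fun t => g t p) 0 * deriv (fun t => fderiv ℝ Ff (t, p) wY) 0) := by
    refine auxDDmul isOpen_Ioo h0ε smvg smfY ?_ (hzf _)
    show g 0 p = 0; rw [hg0]; rfl
  have hdd4 : deriv (deriv (fun t => f t p * fderiv ℝ Gf (t, p) wY)) 0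
      = 2 * (deriv (fun t => f t p) 0 * deriv (fun t => fderiv ℝ Gf (t, p) wY) 0) := by
    refine auxDDmul isOpen_Ioo h0ε smvf smgY ?_ (hzg _)
    show f 0 p = 0; rw [hf0]; rfl
  have hsm1 : ContDiffOn ℝ (⊤ : ℕ∞) (fun t => fderiv ℝ Ff (t, p) (e 0)
      * fderiv ℝ Gf (t, p) wX) (Set.Ioo (-ε) ε) := smf0.mul smgX
  have hsm2 : ContDiffOn ℝ (⊤ : ℕ∞) (fun t => fderiv ℝ Gf (t, p) (e 0)
      * fderiv ℝ Ff (t, p) wX) (Set.Ioo (-ε) ε) := smg0.mul smfX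
  have hsm3 : ContDiffOn ℝ (⊤ : ℕ∞) (fun t => g t p * fderiv ℝ Ff (t, p) wY)
      (Set.Ioo (-ε) ε) := smvg.mul smfY
  have hsm4 : ContDiffOn ℝ (⊤ : ℕ∞) (fun t => f t p * fderiv ℝ Gf (t, p) wY)
      (Set.Ioo (-ε) ε) := smvf.mul smgY
  have hsplit1 : deriv (deriv (fun t => fderiv ℝ Ff (t, p) (e 0) * fderiv ℝ Gf (t, p) wX
      - fderiv ℝ Gf (t, p) (e 0) * fderiv ℝ Ff (t, p) wX
      - g t p * fderiv ℝ Ff (t, p) wY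
      + f t p * fderiv ℝ Gf (t, p) wY)) 0
      = deriv (deriv (fun t => fderiv ℝ Ff (t, p) (e 0) * fderiv ℝ Gf (t, p) wX
          - fderiv ℝ Gf (t, p) (e 0) * fderiv ℝ Ff (t, p) wX
          - g t p * fderiv ℝ Ff (t, p) wY)) 0
        + deriv (deriv (fun t => f t p * fderiv ℝ Gf (t, p) wY)) 0 :=
    auxDDadd isOpen_Ioo h0ε ((hsm1.sub hsm2).sub hsm3) hsm4
  have hsplit2 : deriv (deriv (fun t => fderiv ℝ Ff (t, p) (e 0) * fderiv ℝ Gf (t, p) wX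
      - fderiv ℝ Gf (t, p) (e 0) * fderiv ℝ Ff (t, p) wX
      - g t p * fderiv ℝ Ff (t, p) wY)) 0
      = deriv (deriv (fun t => fderiv ℝ Ff (t, p) (e 0) * fderiv ℝ Gf (t, p) wX
          - fderiv ℝ Gf (t, p) (e 0) * fderiv ℝ Ff (t, p) wX)) 0
        - deriv (deriv (fun t => g t p * fderiv ℝ Ff (t, p) wY)) 0 :=
    auxDDsub isOpen_Ioo h0ε (hsm1.sub hsm2) hsm3
  have hsplit3 : deriv (deriv (fun t => fderiv ℝ Ff (t, p) (e 0) * fderiv ℝ Gf (t, p) wX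
      - fderiv ℝ Gf (t, p) (e 0) * fderiv ℝ Ff (t, p) wX)) 0
      = deriv (deriv (fun t => fderiv ℝ Ff (t, p) (e 0) * fderiv ℝ Gf (t, p) wX)) 0
        - deriv (deriv (fun t => fderiv ℝ Gf (t, p) (e 0) * fderiv ℝ Ff (t, p) wX)) 0 :=
    auxDDsub isOpen_Ioo h0ε hsm1 hsm2
  -- first derivatives at 0
  have duf0 : deriv (fun t => fderiv ℝ Ff (t, p) (e 0)) 0 = fderiv ℝ (A1 Ff) (0, p) (e 0) :=
    (auxD1 hU hf (hmem h0ε p) (e 0)).deriv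
  have dug0 : deriv (fun t => fderiv ℝ Gf (t, p) (e 0)) 0 = fderiv ℝ (A1 Gf) (0, p) (e 0) :=
    (auxD1 hU hg (hmem h0ε p) (e 0)).deriv
  have dufX : deriv (fun t => fderiv ℝ Ff (t, p) wX) 0 = fderiv ℝ (A1 Ff) (0, p) wX :=
    (auxD1 hU hf (hmem h0ε p) wX).deriv
  have dugX : deriv (fun t => fderiv ℝ Gf (t, p) wX) 0 = fderiv ℝ (A1 Gf) (0, p) wX :=
    (auxD1 hU hg (hmem h0ε p) wX).deriv
  have dufY : deriv (fun t => fderiv ℝ Ff (t, p) wY) 0 = fderiv ℝ (A1 Ff) (0, p) wY :=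
    (auxD1 hU hf (hmem h0ε p) wY).deriv
  have dugY : deriv (fun t => fderiv ℝ Gf (t, p) wY) 0 = fderiv ℝ (A1 Gf) (0, p) wY :=
    (auxD1 hU hg (hmem h0ε p) wY).deriv
  have dvf : deriv (fun t => f t p) 0 = A1 Ff (0, p) :=
    (auxM1 hU hf (hmem h0ε p)).deriv
  have dvg : deriv (fun t => g t p) 0 = A1 Gf (0, p) :=
    (auxM1 hU hg (hmem h0ε p)).deriv
  -- rewrite the goal
  have hXGd : Xop (fun q => deriv (fun t => g t q) 0) p = fderiv ℝ (A1 Gf) (0, p) wX := by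
    simp only [Xop, hpdGd, hedef, hwX]
    exact (auxLin _ _ _ _ _).symm
  have hXFd : Xop (fun q => deriv (fun t => f t q) 0) p = fderiv ℝ (A1 Ff) (0, p) wX := by
    simp only [Xop, hpdFd, hedef, hwX]
    exact (auxLin _ _ _ _ _).symm
  have hYGd : Yop (fun q => deriv (fun t => g t q) 0) p = fderiv ℝ (A1 Gf) (0, p) wY := by
    simp only [Yop, hpdGd, hedef, hwY]
    exact (auxLin' _ _ _ _ _).symm
  have hYFd : Yop (fun q => deriv (fun t => f t q) 0) p = fderiv ℝ (A1 Ff) (0, p) wY := by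
    simp only [Yop, hpdFd, hedef, hwY]
    exact (auxLin' _ _ _ _ _).symm
  have hpdFd0 : pd (fun q => deriv (fun t => f t q) 0) 0 p = fderiv ℝ (A1 Ff) (0, p) (e 0) :=
    hpdFd 0
  have hpdGd0 : pd (fun q => deriv (fun t => g t q) 0) 0 p = fderiv ℝ (A1 Gf) (0, p) (e 0) :=
    hpdGd 0
  rw [hpdFd0, hpdGd0, hXGd, hXFd, hYGd, hYFd, dvf, dvg]
  have key : fderiv ℝ (A1 (A1 Gf)) (0, p) (e 3) - fderiv ℝ (A1 (A1 Ff)) (0, p) (e 4)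
      = 2 * (fderiv ℝ (A1 Ff) (0, p) (e 0) * fderiv ℝ (A1 Gf) (0, p) wX)
        - 2 * (fderiv ℝ (A1 Gf) (0, p) (e 0) * fderiv ℝ (A1 Ff) (0, p) wX)
        - 2 * (A1 Gf (0, p) * fderiv ℝ (A1 Ff) (0, p) wY)
        + 2 * (A1 Ff (0, p) * fderiv ℝ (A1 Gf) (0, p) wY) := by
    rw [← hddl, hdd, hsplit1, hsplit2, hsplit3, hdd1, hdd2, hdd3, hdd4,
      duf0, dug0, dufX, dugX, dufY, dugY, dvf, dvg]
  have he3 : e 3 = ((0:ℝ), (Pi.single 3 1 : E5)) := by rw [hedef]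
  have he4 : e 4 = ((0:ℝ), (Pi.single 4 1 : E5)) := by rw [hedef]
  rw [← he3, ← he4]
  linarith [key]


lemma auxFubini (Φ : ℝ → ℝ → ℝ) (hΦ : Continuous fun q : ℝ × ℝ => Φ q.1 q.2)
    {a b : ℝ} (hab : a ≤ b) :
    (∫ x in a..b, ∫ y in a..b, Φ x y) = ∫ y in a..b, ∫ x in a..b, Φ x y := by
  simp only [intervalIntegral.integral_of_le hab]
  have hres : (volume.restrict (Ioc a b)).prod (volume.restrict (Ioc a b))
      = (volume.prod volume).restrict ((Ioc a b) ×ˢ (Ioc a b)) :=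
    Measure.prod_restrict _ _
  have hint : Integrable (Function.uncurry Φ)
      ((volume.restrict (Ioc a b)).prod (volume.restrict (Ioc a b))) := by
    rw [hres]
    have : IntegrableOn (Function.uncurry Φ) ((Icc a b) ×ˢ (Icc a b)) (volume.prod volume) :=
      hΦ.continuousOn.integrableOn_compact (isCompact_Icc.prod isCompact_Icc)
    exact this.mono_set (prod_mono Ioc_subset_Icc_self Ioc_subset_Icc_self)
  exact integral_integral_swap hint


lemma auxFTC (Φ : E5 → ℝ) (hΦ : ContDiff ℝ (⊤ : ℕ∞) Φ) (j : Fin 5)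
    (hper : ∀ x : E5, Φ (x + Pi.single j (2 * Real.pi)) = Φ x) (c : E5) :
    (∫ s in (0:ℝ)..(2 * Real.pi),
      fderiv ℝ Φ (c + s • (Pi.single j 1 : E5)) (Pi.single j 1)) = 0 := by
  have hline : ∀ s : ℝ, HasDerivAt (fun s' : ℝ => Φ (c + s' • (Pi.single j 1 : E5)))
      (fderiv ℝ Φ (c + s • (Pi.single j 1 : E5)) (Pi.single j 1)) s := by
    intro s
    have h1 : HasDerivAt (fun s' : ℝ => c + s' • (Pi.single j 1 : E5))
        (Pi.single j 1 : E5) s := by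
      simpa using ((hasDerivAt_id s).smul_const (Pi.single j 1 : E5)).const_add c
    exact ((hΦ.differentiable (by simp)) _).hasFDerivAt.comp_hasDerivAt s h1
  have hd : deriv (fun s' : ℝ => Φ (c + s' • (Pi.single j 1 : E5)))
      = fun s => fderiv ℝ Φ (c + s • (Pi.single j 1 : E5)) (Pi.single j 1) :=
    funext fun s => (hline s).deriv
  have hcontline : Continuous fun s : ℝ => c + s • (Pi.single j 1 : E5) := by fun_prop
  have hcont : Continuous fun s : ℝ =>
      fderiv ℝ Φ (c + s • (Pi.single j 1 : E5)) (Pi.single j 1) :=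
    (((hΦ.continuous_fderiv (by simp)).comp hcontline).clm_apply continuous_const)
  rw [intervalIntegral.integral_deriv_eq_sub' _ hd (fun x _ => (hline x).differentiableAt)
    hcont.continuousOn]
  have h2 : c + (2 * Real.pi) • (Pi.single j 1 : E5) = c + Pi.single j (2 * Real.pi) := by
    congr 1
    funext k
    by_cases hk : k = j <;> simp [hk, Pi.single_apply]
  rw [h2, hper c]
  simp


noncomputable def Phi (f : ℝ → E5 → ℝ) : E5 → ℝ :=
  fun x => A1 (A1 (fun q : ℝ × E5 => f q.1 q.2)) (0, x)

lemma auxPhiSmooth (ε : ℝ) (hε : 0 < ε) (f : ℝ → E5 → ℝ)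
    (hf : ContDiffOn ℝ (⊤ : ℕ∞) (fun q : ℝ × E5 => f q.1 q.2) (Set.Ioo (-ε) ε ×ˢ Set.univ)) :
    ContDiff ℝ (⊤ : ℕ∞) (Phi f) := by
  have hU : IsOpen (Set.Ioo (-ε) ε ×ˢ (Set.univ : Set E5)) := isOpen_Ioo.prod isOpen_univ
  have hA2 := auxM3 hU (auxM3 hU hf (1, 0)) (1, 0)
  rw [← contDiffOn_univ]
  exact hA2.comp ((contDiff_const.prodMk contDiff_id).contDiffOn)
    (fun x _ => ⟨⟨show -ε < (0:ℝ) by linarith, show (0:ℝ) < ε from hε⟩, trivial⟩)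

lemma auxA1per (ε : ℝ) {F : ℝ × E5 → ℝ}
    (hF : ContDiffOn ℝ (⊤ : ℕ∞) F (Set.Ioo (-ε) ε ×ˢ Set.univ))
    (hper : ∀ t ∈ Set.Ioo (-ε) ε, ∀ (x : E5) (i : Fin 5),
      F (t, x + Pi.single i (2 * Real.pi)) = F (t, x)) :
    ∀ t ∈ Set.Ioo (-ε) ε, ∀ (x : E5) (i : Fin 5),
      A1 F (t, x + Pi.single i (2 * Real.pi)) = A1 F (t, x) := by
  have hU : IsOpen (Set.Ioo (-ε) ε ×ˢ (Set.univ : Set E5)) := isOpen_Ioo.prod isOpen_univ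
  intro t ht x i
  have h1 := (auxM1 hU hF (show (t, x + Pi.single i (2 * Real.pi)) ∈
    Set.Ioo (-ε) ε ×ˢ (Set.univ : Set E5) from ⟨ht, trivial⟩)).deriv
  have h2 := (auxM1 hU hF (show (t, x) ∈
    Set.Ioo (-ε) ε ×ˢ (Set.univ : Set E5) from ⟨ht, trivial⟩)).deriv
  have h3 : deriv (fun t' => F (t', x + Pi.single i (2 * Real.pi))) t
      = deriv (fun t' => F (t', x)) t := by
    apply Filter.EventuallyEq.deriv_eq
    filter_upwards [isOpen_Ioo.mem_nhds ht] with s hs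
    exact hper s hs x i
  show fderiv ℝ F (t, x + Pi.single i (2 * Real.pi)) (1, 0) = fderiv ℝ F (t, x) (1, 0)
  rw [← h1, ← h2]
  exact h3

lemma auxPhiPer (ε : ℝ) (hε : 0 < ε) (f : ℝ → E5 → ℝ)
    (hf : ContDiffOn ℝ (⊤ : ℕ∞) (fun q : ℝ × E5 => f q.1 q.2) (Set.Ioo (-ε) ε ×ˢ Set.univ))
    (hper : ∀ t ∈ Set.Ioo (-ε) ε, Periodic5 (f t)) :
    ∀ (x : E5) (i : Fin 5), Phi f (x + Pi.single i (2 * Real.pi)) = Phi f x := by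
  have hU : IsOpen (Set.Ioo (-ε) ε ×ˢ (Set.univ : Set E5)) := isOpen_Ioo.prod isOpen_univ
  have h1 := auxA1per ε hf (fun t ht x i => hper t ht x i)
  have h2 := auxA1per ε (auxM3 hU hf (1, 0)) h1
  intro x i
  exact h2 0 ⟨by linarith, hε⟩ x i

lemma auxKey2 (ε : ℝ) (hε : 0 < ε) (f g : ℝ → (Fin 5 → ℝ) → ℝ)
    (hf : ContDiffOn ℝ (⊤ : ℕ∞) (fun q : ℝ × (Fin 5 → ℝ) => f q.1 q.2)
      (Set.Ioo (-ε) ε ×ˢ Set.univ))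
    (hg : ContDiffOn ℝ (⊤ : ℕ∞) (fun q : ℝ × (Fin 5 → ℝ) => g q.1 q.2)
      (Set.Ioo (-ε) ε ×ˢ Set.univ))
    (hco : ∀ t ∈ Set.Ioo (-ε) ε, CoisotropicPair (f t) (g t))
    (hf0 : f 0 = 0) (hg0 : g 0 = 0) (p : E5) :
    pd (fun q => deriv (fun t => f t q) 0) 0 p * Xop (fun q => deriv (fun t => g t q) 0) p
      - pd (fun q => deriv (fun t => g t q) 0) 0 p * Xop (fun q => deriv (fun t => f t q) 0) p
      + deriv (fun t => f t p) 0 * Yop (fun q => deriv (fun t => g t q) 0) p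
      - deriv (fun t => g t p) 0 * Yop (fun q => deriv (fun t => f t q) 0) p
    = (1/2) * (fderiv ℝ (Phi g) p (Pi.single 3 1) - fderiv ℝ (Phi f) p (Pi.single 4 1)) := by
  have hU : IsOpen (Set.Ioo (-ε) ε ×ˢ (Set.univ : Set E5)) := isOpen_Ioo.prod isOpen_univ
  have h0ε : (0:ℝ) ∈ Set.Ioo (-ε) ε := ⟨by linarith, hε⟩
  have hA2f : ContDiffOn ℝ (⊤ : ℕ∞) (A1 (A1 (fun q : ℝ × E5 => f q.1 q.2)))
      (Set.Ioo (-ε) ε ×ˢ Set.univ) := auxM3 hU (auxM3 hU hf (1, 0)) (1, 0)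
  have hA2g : ContDiffOn ℝ (⊤ : ℕ∞) (A1 (A1 (fun q : ℝ × E5 => g q.1 q.2)))
      (Set.Ioo (-ε) ε ×ˢ Set.univ) := auxM3 hU (auxM3 hU hg (1, 0)) (1, 0)
  rw [auxKey ε hε f g hf hg hco hf0 hg0 p,
    show fderiv ℝ (A1 (A1 (fun q : ℝ × E5 => g q.1 q.2))) (0, p) (0, Pi.single 3 1)
      = fderiv ℝ (Phi g) p (Pi.single 3 1) from (auxM2 hU hA2g ⟨h0ε, trivial⟩ _).symm,
    show fderiv ℝ (A1 (A1 (fun q : ℝ × E5 => f q.1 q.2))) (0, p) (0, Pi.single 4 1)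
      = fderiv ℝ (Phi f) p (Pi.single 4 1) from (auxM2 hU hA2f ⟨h0ε, trivial⟩ _).symm]

/-- Any smooth family of coisotropic pairs starting at the zero section has its
`t`-derivative `(ḟ, ġ)` at `t = 0` satisfying the Kuranishi obstruction equation:
`∫₀^{2π}∫₀^{2π} [∂ḟ/∂x1·X(ġ) − ∂ġ/∂x1·X(ḟ) + ḟ·Y(ġ) − ġ·Y(ḟ)] dx4 dx5 = 0`. -/
theorem infinitesimal_coisotropic_deformation_kuranishi
    (ε : ℝ) (hε : 0 < ε) (f g : ℝ → (Fin 5 → ℝ) → ℝ)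
    (hf : ContDiffOn ℝ (⊤ : ℕ∞) (fun q : ℝ × (Fin 5 → ℝ) => f q.1 q.2)
      (Set.Ioo (-ε) ε ×ˢ Set.univ))
    (hg : ContDiffOn ℝ (⊤ : ℕ∞) (fun q : ℝ × (Fin 5 → ℝ) => g q.1 q.2)
      (Set.Ioo (-ε) ε ×ˢ Set.univ))
    (hco : ∀ t ∈ Set.Ioo (-ε) ε, CoisotropicPair (f t) (g t))
    (hf0 : f 0 = 0) (hg0 : g 0 = 0) :
    ∀ x1 x2 x3 : ℝ,
      (∫ x4 in (0:ℝ)..(2 * Real.pi), ∫ x5 in (0:ℝ)..(2 * Real.pi),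
        (pd (fun q => deriv (fun t => f t q) 0) 0 ![x1, x2, x3, x4, x5]
            * Xop (fun q => deriv (fun t => g t q) 0) ![x1, x2, x3, x4, x5]
          - pd (fun q => deriv (fun t => g t q) 0) 0 ![x1, x2, x3, x4, x5]
            * Xop (fun q => deriv (fun t => f t q) 0) ![x1, x2, x3, x4, x5]
          + deriv (fun t => f t ![x1, x2, x3, x4, x5]) 0
            * Yop (fun q => deriv (fun t => g t q) 0) ![x1, x2, x3, x4, x5]
          - deriv (fun t => g t ![x1, x2, x3, x4, x5]) 0
            * Yop (fun q => deriv (fun t => f t q) 0) ![x1, x2, x3, x4, x5])) = 0 := by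
  intro x1 x2 x3
  have h2π : (0:ℝ) ≤ 2 * Real.pi := by positivity
  have hΦ : ContDiff ℝ (⊤ : ℕ∞) (Phi f) := auxPhiSmooth ε hε f hf
  have hΨ : ContDiff ℝ (⊤ : ℕ∞) (Phi g) := auxPhiSmooth ε hε g hg
  have hΦper := auxPhiPer ε hε f hf (fun t ht => (hco t ht).2.2.1)
  have hΨper := auxPhiPer ε hε g hg (fun t ht => (hco t ht).2.2.2.1)
  have hKey := auxKey2 ε hε f g hf hg hco hf0 hg0
  simp only [hKey]
  -- continuity facts
  have hcontΦ : Continuous fun x : E5 => fderiv ℝ (Phi f) x (Pi.single 4 1) :=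
    (hΦ.continuous_fderiv (by simp)).clm_apply continuous_const
  have hcontΨ : Continuous fun x : E5 => fderiv ℝ (Phi g) x (Pi.single 3 1) :=
    (hΨ.continuous_fderiv (by simp)).clm_apply continuous_const
  have hpair : Continuous fun q : ℝ × ℝ => (![x1, x2, x3, q.1, q.2] : E5) := by
    apply continuous_pi
    intro i
    fin_cases i <;> simp <;> fun_prop
  have hline : ∀ x4 : ℝ, Continuous fun s : ℝ => (![x1, x2, x3, x4, s] : E5) :=
    fun x4 => hpair.comp (continuous_const.prodMk continuous_id)
  have hline' : ∀ x5 : ℝ, Continuous fun s : ℝ => (![x1, x2, x3, s, x5] : E5) :=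
    fun x5 => hpair.comp (continuous_id.prodMk continuous_const)
  -- vector identities
  have hv5 : ∀ x4 s : ℝ, (![x1, x2, x3, x4, s] : E5)
      = ![x1, x2, x3, x4, 0] + s • (Pi.single 4 1 : E5) := by
    intro x4 s; funext i; fin_cases i <;> simp
  have hv4 : ∀ x4 x5 : ℝ, (![x1, x2, x3, x4, x5] : E5)
      = ![x1, x2, x3, 0, x5] + x4 • (Pi.single 3 1 : E5) := by
    intro x4 x5; funext i; fin_cases i <;> simp
  -- vanishing line integrals
  have hSf0 : ∀ x4 : ℝ, (∫ x5 in (0:ℝ)..(2 * Real.pi),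
      fderiv ℝ (Phi f) ![x1, x2, x3, x4, x5] (Pi.single 4 1)) = 0 := by
    intro x4
    have h := auxFTC (Phi f) hΦ 4 (fun x => hΦper x 4) ![x1, x2, x3, x4, 0]
    have hcongr : (∫ x5 in (0:ℝ)..(2 * Real.pi),
        fderiv ℝ (Phi f) ![x1, x2, x3, x4, x5] (Pi.single 4 1))
        = ∫ s in (0:ℝ)..(2 * Real.pi),
            fderiv ℝ (Phi f) (![x1, x2, x3, x4, 0] + s • (Pi.single 4 1 : E5))
              (Pi.single 4 1) :=
      intervalIntegral.integral_congr (fun s _ => by rw [hv5 x4 s])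
    rw [hcongr]; exact h
  have hSg0 : ∀ x5 : ℝ, (∫ x4 in (0:ℝ)..(2 * Real.pi),
      fderiv ℝ (Phi g) ![x1, x2, x3, x4, x5] (Pi.single 3 1)) = 0 := by
    intro x5
    have h := auxFTC (Phi g) hΨ 3 (fun x => hΨper x 3) ![x1, x2, x3, 0, x5]
    have hcongr : (∫ x4 in (0:ℝ)..(2 * Real.pi),
        fderiv ℝ (Phi g) ![x1, x2, x3, x4, x5] (Pi.single 3 1))
        = ∫ s in (0:ℝ)..(2 * Real.pi),
            fderiv ℝ (Phi g) (![x1, x2, x3, 0, x5] + s • (Pi.single 3 1 : E5))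
              (Pi.single 3 1) :=
      intervalIntegral.integral_congr (fun s _ => by rw [hv4 s x5])
    rw [hcongr]; exact h
  -- simplify the inner integral
  have hinner : ∀ x4 : ℝ, (∫ x5 in (0:ℝ)..(2 * Real.pi),
      (1/2) * (fderiv ℝ (Phi g) ![x1, x2, x3, x4, x5] (Pi.single 3 1)
        - fderiv ℝ (Phi f) ![x1, x2, x3, x4, x5] (Pi.single 4 1)))
      = (1/2) * ∫ x5 in (0:ℝ)..(2 * Real.pi),
          fderiv ℝ (Phi g) ![x1, x2, x3, x4, x5] (Pi.single 3 1) := by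
    intro x4
    rw [intervalIntegral.integral_const_mul,
      intervalIntegral.integral_sub
        ((show Continuous fun x5 : ℝ =>
            fderiv ℝ (Phi g) ![x1, x2, x3, x4, x5] (Pi.single 3 1)
          from hcontΨ.comp (hline x4)).intervalIntegrable _ _)
        ((show Continuous fun x5 : ℝ =>
            fderiv ℝ (Phi f) ![x1, x2, x3, x4, x5] (Pi.single 4 1)
          from hcontΦ.comp (hline x4)).intervalIntegrable _ _),
      hSf0 x4]
    ring
  simp only [hinner]
  rw [intervalIntegral.integral_const_mul,
    auxFubini (fun x4 x5 => fderiv ℝ (Phi g) ![x1, x2, x3, x4, x5] (Pi.single 3 1))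
      (show Continuous fun q : ℝ × ℝ =>
        fderiv ℝ (Phi g) ![x1, x2, x3, q.1, q.2] (Pi.single 3 1)
      from hcontΨ.comp hpair) h2π,
    intervalIntegral.integral_congr (g := fun _ : ℝ => (0:ℝ)) (fun x5 _ => hSg0 x5)]
  simp
end

section
/- For the pair of smooth 2π-periodic functions f(x) = cos x2 and g(x) = sin x2 on ℝ^5 one has: (i) the linearized coisotropicity equation ∂g/∂x4 − ∂f/∂x5 = 0 holds everywhere; (ii) for all (x1, x2, x3) ∈ ℝ³, ∫₀^{2π} ∫₀^{2π} [ ∂f/∂x1 · X(g) − ∂g/∂x1 · X(f) + f·Y(g) − g·Y(f) ] dx4 dx5 = (2π)² · sin x1, which is nonzero for some x1. -/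
open Real in
lemma pd_cos5 (i : Fin 5) (p : Fin 5 → ℝ) :
    pd (fun q => Real.cos (q 1)) i p = -Real.sin (p 1) * (Pi.single i 1 : Fin 5 → ℝ) 1 := by
  have hL : HasFDerivAt (fun q : Fin 5 → ℝ => q 1)
      (ContinuousLinearMap.proj (R := ℝ) (φ := fun _ : Fin 5 => ℝ) 1) p :=
    hasFDerivAt_apply 1 p
  have h : HasFDerivAt (fun q : Fin 5 → ℝ => Real.cos (q 1))
      (-Real.sin (p 1) • (ContinuousLinearMap.proj (1 : Fin 5) : (Fin 5 → ℝ) →L[ℝ] ℝ)) p :=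
    (Real.hasDerivAt_cos (p 1)).comp_hasFDerivAt (f := fun q : Fin 5 → ℝ => q 1) p hL
  simp [pd, h.fderiv]

open Real in
lemma pd_sin5 (i : Fin 5) (p : Fin 5 → ℝ) :
    pd (fun q => Real.sin (q 1)) i p = Real.cos (p 1) * (Pi.single i 1 : Fin 5 → ℝ) 1 := by
  have hL : HasFDerivAt (fun q : Fin 5 → ℝ => q 1)
      (ContinuousLinearMap.proj (R := ℝ) (φ := fun _ : Fin 5 => ℝ) 1) p :=
    hasFDerivAt_apply 1 p
  have h : HasFDerivAt (fun q : Fin 5 → ℝ => Real.sin (q 1))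
      (Real.cos (p 1) • (ContinuousLinearMap.proj (1 : Fin 5) : (Fin 5 → ℝ) →L[ℝ] ℝ)) p :=
    (Real.hasDerivAt_sin (p 1)).comp_hasFDerivAt (f := fun q : Fin 5 → ℝ => q 1) p hL
  simp [pd, h.fderiv]

/-- For `f = cos x2` and `g = sin x2`: (i) the linearized coisotropicity equation holds,
and (ii) the Kuranishi integral equals `(2π)² sin x1`, which is nonzero for some `x1`. -/

theorem cos_sin_infinitesimal_deformation_obstructed :
    (∀ p : Fin 5 → ℝ,
      pd (fun q => Real.sin (q 1)) 3 p - pd (fun q => Real.cos (q 1)) 4 p = 0) ∧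
    (∀ x1 x2 x3 : ℝ,
      (∫ x4 in (0:ℝ)..(2 * Real.pi), ∫ x5 in (0:ℝ)..(2 * Real.pi),
        (pd (fun q => Real.cos (q 1)) 0 ![x1, x2, x3, x4, x5]
            * Xop (fun q => Real.sin (q 1)) ![x1, x2, x3, x4, x5]
          - pd (fun q => Real.sin (q 1)) 0 ![x1, x2, x3, x4, x5]
            * Xop (fun q => Real.cos (q 1)) ![x1, x2, x3, x4, x5]
          + Real.cos x2 * Yop (fun q => Real.sin (q 1)) ![x1, x2, x3, x4, x5]
          - Real.sin x2 * Yop (fun q => Real.cos (q 1)) ![x1, x2, x3, x4, x5]))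
        = (2 * Real.pi) ^ 2 * Real.sin x1) ∧
    (∃ x1 : ℝ, (2 * Real.pi) ^ 2 * Real.sin x1 ≠ 0) := by
  refine ⟨?_, ?_, ?_⟩
  · intro p
    simp [pd_sin5, pd_cos5, Pi.single_apply]
  · intro x1 x2 x3
    have key : ∀ x4 x5 : ℝ,
        (pd (fun q => Real.cos (q 1)) 0 ![x1, x2, x3, x4, x5]
            * Xop (fun q => Real.sin (q 1)) ![x1, x2, x3, x4, x5]
          - pd (fun q => Real.sin (q 1)) 0 ![x1, x2, x3, x4, x5]
            * Xop (fun q => Real.cos (q 1)) ![x1, x2, x3, x4, x5]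
          + Real.cos x2 * Yop (fun q => Real.sin (q 1)) ![x1, x2, x3, x4, x5]
          - Real.sin x2 * Yop (fun q => Real.cos (q 1)) ![x1, x2, x3, x4, x5])
        = Real.sin x1 := by
      intro x4 x5
      simp [Xop, Yop, pd_sin5, pd_cos5, Pi.single_apply]
      ring_nf
      rw [show Real.cos x2 ^ 2 * Real.sin x1 + Real.sin x1 * Real.sin x2 ^ 2
            = Real.sin x1 * (Real.sin x2 ^ 2 + Real.cos x2 ^ 2) by ring,
          Real.sin_sq_add_cos_sq, mul_one]
    simp only [key, intervalIntegral.integral_const, smul_eq_mul, sub_zero]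
    ring
  · exact ⟨Real.pi / 2, by simp [Real.sin_pi_div_two, pow_ne_zero, Real.pi_ne_zero]⟩
end

section
/- Let (f, g) be a coisotropic pair and let α be the 1-form on ℝ^5 given at p = (x1,…,x5) by α_p(V) = sin x1 · V₂ + cos x1 · V₃ + f(p) · V₄ + g(p) · V₅, with (dα)_p(V,W) = cos x1 · (V₁W₂ − V₂W₁) − sin x1 · (V₁W₃ − V₃W₁) + Σ_{i=1}^{5} ∂f/∂x_i(p) · (V_iW₄ − V₄W_i) + Σ_{i=1}^{5} ∂g/∂x_i(p) · (V_iW₅ − V₅W_i). Then at every point p the characteristic space {V ∈ ℝ^5 : α_p(V) = 0 and (dα)_p(V,W) = 0 for every W with α_p(W) = 0} equals the span of the two vectors V₁ := X(f)(p)·e1 − ∂f/∂x1(p)·𝐗(p) + e4 − f(p)·𝐘(p) and V₂ := X(g)(p)·e1 − ∂g/∂x1(p)·𝐗(p) + e5 − g(p)·𝐘(p), where 𝐗(p) := cos x1 · e2 − sin x1 · e3 and 𝐘(p) := sin x1 · e2 + cos x1 · e3. -/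
/-- The `i`-th standard basis vector of `ℝ^5`. -/
def e (i : Fin 5) : Fin 5 → ℝ := Pi.single i 1

/-- The vector field `𝐗 = cos x1 · e2 − sin x1 · e3`. -/
noncomputable def Xv (p : Fin 5 → ℝ) : Fin 5 → ℝ :=
  Real.cos (p 0) • e 1 - Real.sin (p 0) • e 2

/-- The vector field `𝐘 = sin x1 · e2 + cos x1 · e3`. -/
noncomputable def Yv (p : Fin 5 → ℝ) : Fin 5 → ℝ :=
  Real.sin (p 0) • e 1 + Real.cos (p 0) • e 2

/-- For a coisotropic pair `(f, g)`, the characteristic space at each point of the pullback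
1-form `α = sin x1 dx2 + cos x1 dx3 + f dx4 + g dx5` is spanned by the two vectors
`X(f)·e1 − ∂f/∂x1·𝐗 + e4 − f·𝐘` and `X(g)·e1 − ∂g/∂x1·𝐗 + e5 − g·𝐘`. -/
theorem characteristic_space_of_coisotropic_section
    (f g : (Fin 5 → ℝ) → ℝ) (h : CoisotropicPair f g) (p : Fin 5 → ℝ) :
    {V : Fin 5 → ℝ |
      (Real.sin (p 0) * V 1 + Real.cos (p 0) * V 2 + f p * V 3 + g p * V 4 = 0) ∧
      ∀ W : Fin 5 → ℝ,
        Real.sin (p 0) * W 1 + Real.cos (p 0) * W 2 + f p * W 3 + g p * W 4 = 0 →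
        Real.cos (p 0) * (V 0 * W 1 - V 1 * W 0)
          - Real.sin (p 0) * (V 0 * W 2 - V 2 * W 0)
          + (∑ i : Fin 5, pd f i p * (V i * W 3 - V 3 * W i))
          + (∑ i : Fin 5, pd g i p * (V i * W 4 - V 4 * W i)) = 0}
    = ↑(Submodule.span ℝ
        {Xop f p • e 0 - pd f 0 p • Xv p + e 3 - f p • Yv p,
         Xop g p • e 0 - pd g 0 p • Xv p + e 4 - g p • Yv p}) := by
  obtain ⟨-, -, -, -, hPDE⟩ := h
  have star := hPDE p
  have hsc : Real.sin (p 0) ^ 2 + Real.cos (p 0) ^ 2 = 1 := Real.sin_sq_add_cos_sq _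
  simp only [Xop, Yop] at star
  ext V
  simp only [Set.mem_setOf_eq, SetLike.mem_coe, Submodule.mem_span_pair]
  constructor
  · rintro ⟨hα, hd⟩
    have h1 := hd (e 0) (by simp [e, Pi.single_apply])
    have h2 := hd (Xv p) (by simp [Xv, e, Pi.single_apply]; ring)
    simp only [e, Xv, Yv, Pi.add_apply, Pi.sub_apply, Pi.smul_apply, smul_eq_mul,
      Pi.single_apply, Fin.sum_univ_five, Fin.reduceEq, reduceIte] at h1 h2
    refine ⟨V 3, V 4, funext fun j => ?_⟩
    fin_cases j
    · simp [Xop, e, Xv, Yv, Pi.single_apply]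
      linear_combination V 0 * hsc - h2
    · simp [Xop, e, Xv, Yv, Pi.single_apply]
      linear_combination Real.cos (p 0) * h1 - Real.sin (p 0) * hα + V 1 * hsc
    · simp [Xop, e, Xv, Yv, Pi.single_apply]
      linear_combination (-Real.sin (p 0)) * h1 - Real.cos (p 0) * hα + V 2 * hsc
    · simp [Xop, e, Xv, Yv, Pi.single_apply]
    · simp [Xop, e, Xv, Yv, Pi.single_apply]
  · rintro ⟨a, b, rfl⟩
    constructor
    · simp only [Xop, e, Xv, Yv, Pi.add_apply, Pi.sub_apply, Pi.smul_apply, smul_eq_mul,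
        Pi.single_apply, Fin.reduceEq, reduceIte]
      linear_combination (-(a * f p + b * g p)) * hsc
    · intro W hW
      simp only [Xop, e, Xv, Yv, Pi.add_apply, Pi.sub_apply, Pi.smul_apply, smul_eq_mul,
        Pi.single_apply, Fin.sum_univ_five, Fin.reduceEq, reduceIte]
      linear_combination
        (-(a * (Real.sin (p 0) * pd f 1 p + Real.cos (p 0) * pd f 2 p))
          - b * (Real.sin (p 0) * pd g 1 p + Real.cos (p 0) * pd g 2 p)) * hW
        + (b * W 3 - a * W 4) * star
        + (a * (pd f 0 p * W 0 + pd f 1 p * W 1 + pd f 2 p * W 2)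
          + b * (pd g 0 p * W 0 + pd g 1 p * W 1 + pd g 2 p * W 2)) * hsc
end

section
/- For every t ∈ ℝ: (i) the pair f = t·sin x1, g = 0 is a coisotropic pair (so s_t = t sin x1 d x4 is a smooth coisotropic deformation of S); (ii) for the 1-form α_t on ℝ^5 given at p = (x1,…,x5) by (α_t)_p(V) = sin x1 · V₂ + cos x1 · V₃ + t sin x1 · V₄, with (dα_t)_p(V,W) = cos x1 · (V₁W₂ − V₂W₁) − sin x1 · (V₁W₃ − V₃W₁) + t cos x1 · (V₁W₄ − V₄W₁), the characteristic space {V ∈ ℝ^5 : (α_t)_p(V) = 0 and (dα_t)_p(V,W) = 0 for every W with (α_t)_p(W) = 0} equals span{e4 − t·e2, e5} at every point p. -/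
lemma hasFDerivAt_tsin (t : ℝ) (p : Fin 5 → ℝ) :
    HasFDerivAt (fun p : Fin 5 → ℝ => t * Real.sin (p 0))
      (t • (Real.cos (p 0) • (ContinuousLinearMap.proj 0 : (Fin 5 → ℝ) →L[ℝ] ℝ))) p := by
  have h0 := ((ContinuousLinearMap.proj 0 : (Fin 5 → ℝ) →L[ℝ] ℝ)).hasFDerivAt (x := p)
  exact ((Real.hasDerivAt_sin (p 0)).comp_hasFDerivAt p h0).const_mul t

lemma pd_tsin (t : ℝ) (i : Fin 5) (p : Fin 5 → ℝ) :
    pd (fun p : Fin 5 → ℝ => t * Real.sin (p 0)) i p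
      = t * Real.cos (p 0) * ((Pi.single i 1 : Fin 5 → ℝ) 0) := by
  rw [pd, (hasFDerivAt_tsin t p).fderiv]
  simp [mul_assoc]

lemma pd_zero (i : Fin 5) (p : Fin 5 → ℝ) :
    pd (fun _ : Fin 5 → ℝ => (0:ℝ)) i p = 0 := by
  rw [pd]
  simp [fderiv_const]

/-- For every `t ∈ ℝ`: (i) `(t·sin x1, 0)` is a coisotropic pair, and (ii) the
characteristic space of the 1-form `α_t = sin x1 dx2 + cos x1 dx3 + t sin x1 dx4` at every
point is spanned by `e4 − t·e2` and `e5`. -/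
theorem coisotropic_family_t_sin_characteristic_spaces (t : ℝ) :
    CoisotropicPair (fun p => t * Real.sin (p 0)) (fun _ => 0) ∧
    ∀ p : Fin 5 → ℝ,
      {V : Fin 5 → ℝ |
        (Real.sin (p 0) * V 1 + Real.cos (p 0) * V 2 + t * Real.sin (p 0) * V 3 = 0) ∧
        ∀ W : Fin 5 → ℝ,
          Real.sin (p 0) * W 1 + Real.cos (p 0) * W 2 + t * Real.sin (p 0) * W 3 = 0 →
          Real.cos (p 0) * (V 0 * W 1 - V 1 * W 0)
            - Real.sin (p 0) * (V 0 * W 2 - V 2 * W 0)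
            + t * Real.cos (p 0) * (V 0 * W 3 - V 3 * W 0) = 0}
      = ↑(Submodule.span ℝ {e 3 - t • e 1, e 4}) := by
  constructor
  · refine ⟨?_, contDiff_const, ?_, fun p i => rfl, ?_⟩
    · exact contDiff_const.mul
        (Real.contDiff_sin.comp (ContinuousLinearMap.proj 0 : (Fin 5 → ℝ) →L[ℝ] ℝ).contDiff)
    · intro p i
      simp only [Pi.add_apply, Pi.single_apply]
      split_ifs with h
      · rw [Real.sin_add_two_pi]
      · rw [add_zero]
    · intro p
      simp only [Xop, Yop, pd_tsin, pd_zero]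
      simp (config := { decide := true }) [Pi.single_apply]
  · intro p
    set s := Real.sin (p 0) with hs
    set c := Real.cos (p 0) with hc
    have hsc : s ^ 2 + c ^ 2 = 1 := Real.sin_sq_add_cos_sq (p 0)
    ext V
    simp only [Set.mem_setOf_eq, SetLike.mem_coe]
    constructor
    · rintro ⟨hα, hd⟩
      have h1 := hd (e 0) (by simp (config := { decide := true }) [e, Pi.single_apply])
      simp (config := { decide := true }) [e, Pi.single_apply] at h1
      have h2 := hd (c • e 1 + (-s) • e 2)
        (by simp (config := { decide := true }) [e, Pi.single_apply]; ring)
      simp (config := { decide := true }) [e, Pi.single_apply] at h2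
      have hV2 : V 2 = 0 := by linear_combination c * hα + s * h1 - V 2 * hsc
      have hV1 : V 1 = -(t * V 3) := by
        linear_combination s * hα - c * h1 - (V 1 + t * V 3) * hsc
      have hV0 : V 0 = 0 := by linear_combination h2 - V 0 * hsc
      rw [Submodule.mem_span_pair]
      refine ⟨V 3, V 4, ?_⟩
      funext i
      fin_cases i <;>
        simp (config := { decide := true }) [e, Pi.single_apply, hV0, hV1, hV2] <;> ring
    · intro hV
      rw [Submodule.mem_span_pair] at hV
      obtain ⟨m, n, rfl⟩ := hV
      have hval : ∀ i : Fin 5,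
          (m • (e 3 - t • e 1) + n • e 4) i
            = ![0, -(t*m), 0, m, n] i := by
        intro i
        fin_cases i <;> simp (config := { decide := true }) [e, Pi.single_apply] <;> ring
      rw [hval 0, hval 1, hval 2, hval 3]
      constructor
      · simp; ring
      · intro W _
        simp
        ring
end
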